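/- Let R be a commutative ring in which 2 is invertible, let n ≥ 1, and let σ denote the flip operator on M_n(R) ⊗ M_n(R) (conjugation by the Kronecker swap, exchanging the two tensor factors). Let a, s ∈ M_n(R) ⊗ M_n(R) satisfy σ a σ = −a and σ s σ = s. Let L ∈ M_n(R) and set L₁ = L⊗𝟙, L₂ = 𝟙⊗L. Define r₁₂ = (1/2)(a·L₂ + L₂·a) − L₂·s and r₂₁ = σ r₁₂ σ. Then [a, L₁L₂] + L₁ s L₂ − L₂ s L₁ = [r₁₂, L₁] − [r₂₁, L₂]. -/
import Mathlib


open Matrix Kronecker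

/-- The Kronecker swap matrix `P` on `M_n(R) ⊗ M_n(R)`: conjugation by `P`
exchanges the two tensor factors. -/
def kroneckerSwap (n : ℕ) (R : Type*) [CommRing R] :
    Matrix (Fin n × Fin n) (Fin n × Fin n) R :=
  Matrix.of fun i j => if i.1 = j.2 ∧ i.2 = j.1 then 1 else 0

lemma swap_mul {n : ℕ} {R : Type*} [CommRing R]
    (M : Matrix (Fin n × Fin n) (Fin n × Fin n) R) :
    kroneckerSwap n R * M = Matrix.of (fun i j => M (i.2, i.1) j) := by
  ext ⟨i1, i2⟩ j
  simp [mul_apply, kroneckerSwap, Fintype.sum_prod_type, ite_and]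

lemma mul_swap {n : ℕ} {R : Type*} [CommRing R]
    (M : Matrix (Fin n × Fin n) (Fin n × Fin n) R) :
    M * kroneckerSwap n R = Matrix.of (fun i j => M i (j.2, j.1)) := by
  ext i ⟨j1, j2⟩
  simp [mul_apply, kroneckerSwap, Fintype.sum_prod_type, ite_and]

lemma swap_swap {n : ℕ} {R : Type*} [CommRing R] :
    kroneckerSwap n R * kroneckerSwap n R = 1 := by
  rw [swap_mul]
  ext ⟨i1, i2⟩ ⟨j1, j2⟩
  simp [kroneckerSwap, Matrix.one_apply, Prod.ext_iff, and_comm]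

lemma swap_conj {n : ℕ} {R : Type*} [CommRing R]
    (M : Matrix (Fin n × Fin n) (Fin n × Fin n) R) :
    kroneckerSwap n R * M * kroneckerSwap n R
      = Matrix.of (fun i j => M (i.2, i.1) (j.2, j.1)) := by
  rw [swap_mul, mul_swap]; rfl

lemma swap_conj_kron {n : ℕ} {R : Type*} [CommRing R]
    (A B : Matrix (Fin n) (Fin n) R) :
    kroneckerSwap n R * (A ⊗ₖ B) * kroneckerSwap n R = B ⊗ₖ A := by
  rw [swap_conj]
  ext ⟨i1, i2⟩ ⟨j1, j2⟩
  simp [mul_comm]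

/-- a quadratic Sklyanin-type bracket
`[a, L₁L₂] + L₁ s L₂ − L₂ s L₁` always takes the linear r-matrix form
`[r₁₂, L₁] − [r₂₁, L₂]` with `r₁₂ = ½(a L₂ + L₂ a) − L₂ s` and `r₂₁ = σ r₁₂ σ`,
where `σ` is conjugation by the Kronecker swap, provided `σaσ = −a`, `σsσ = s`. -/
theorem stmt11 (R : Type*) [CommRing R] [Invertible (2 : R)]
    (n : ℕ) (hn : 1 ≤ n)
    (P : Matrix (Fin n × Fin n) (Fin n × Fin n) R) (hP : P = kroneckerSwap n R)
    (a s : Matrix (Fin n × Fin n) (Fin n × Fin n) R)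
    (ha : P * a * P = -a) (hs : P * s * P = s)
    (L : Matrix (Fin n) (Fin n) R)
    (L₁ L₂ : Matrix (Fin n × Fin n) (Fin n × Fin n) R)
    (hL₁ : L₁ = L ⊗ₖ (1 : Matrix (Fin n) (Fin n) R))
    (hL₂ : L₂ = (1 : Matrix (Fin n) (Fin n) R) ⊗ₖ L)
    (r₁₂ r₂₁ : Matrix (Fin n × Fin n) (Fin n × Fin n) R)
    (hr₁₂ : r₁₂ = (⅟(2 : R)) • (a * L₂ + L₂ * a) - L₂ * s)
    (hr₂₁ : r₂₁ = P * r₁₂ * P) :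
    (a * (L₁ * L₂) - (L₁ * L₂) * a) + L₁ * s * L₂ - L₂ * s * L₁
      = (r₁₂ * L₁ - L₁ * r₁₂) - (r₂₁ * L₂ - L₂ * r₂₁) := by
  have hPP : P * P = 1 := by rw [hP]; exact swap_swap
  have hPL₂ : P * L₂ * P = L₁ := by rw [hP, hL₂, hL₁, swap_conj_kron]
  have hcomm : L₂ * L₁ = L₁ * L₂ := by
    rw [hL₁, hL₂, ← mul_kronecker_mul, ← mul_kronecker_mul]
    simp
  -- push-P-right lemmas
  have hPa0 : P * a = -a * P := by
    simpa only [Matrix.mul_assoc, hPP, Matrix.mul_one] using congrArg (· * P) ha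
  have hPs0 : P * s = s * P := by
    simpa only [Matrix.mul_assoc, hPP, Matrix.mul_one] using congrArg (· * P) hs
  have hPL0 : P * L₂ = L₁ * P := by
    simpa only [Matrix.mul_assoc, hPP, Matrix.mul_one] using congrArg (· * P) hPL₂
  have hPa : ∀ x, P * (a * x) = -(a * (P * x)) := fun x => by
    rw [← mul_assoc, hPa0]
    simp only [Matrix.neg_mul, Matrix.mul_assoc]
  have hPs' : ∀ x, P * (s * x) = s * (P * x) := fun x => by
    rw [← mul_assoc, hPs0, mul_assoc]
  have hPL : ∀ x, P * (L₂ * x) = L₁ * (P * x) := fun x => by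
    rw [← mul_assoc, hPL0, mul_assoc]
  have hr₂₁' : r₂₁ = -((⅟(2 : R)) • (a * L₁ + L₁ * a)) - L₁ * s := by
    rw [hr₂₁, hr₁₂]
    simp only [Matrix.mul_sub, Matrix.sub_mul, Matrix.mul_add, Matrix.add_mul,
      Matrix.mul_smul, Matrix.smul_mul, Matrix.mul_assoc, hPa, hPL, hPs', hPP,
      Matrix.mul_one, mul_one, Matrix.mul_neg, Matrix.neg_mul, smul_neg, neg_add]
    module
  have h2 : a = (⅟(2 : R)) • a + (⅟(2 : R)) • a := by
    rw [← two_smul R, smul_smul, mul_invOf_self, one_smul]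
  set b := (⅟(2 : R)) • a with hb
  have hr₁₂' : r₁₂ = b * L₂ + L₂ * b - L₂ * s := by
    rw [hr₁₂, smul_add, hb, Matrix.smul_mul, Matrix.mul_smul]
  have hr₂₁'' : r₂₁ = -(b * L₁ + L₁ * b) - L₁ * s := by
    rw [hr₂₁', smul_add, hb, Matrix.smul_mul, Matrix.mul_smul]
  rw [hr₁₂', hr₂₁'', h2]
  have key : ∀ x, L₂ * (L₁ * x) = L₁ * (L₂ * x) := fun x => by
    rw [← mul_assoc, hcomm, mul_assoc]
  simp only [Matrix.mul_sub, Matrix.sub_mul, Matrix.mul_add, Matrix.add_mul,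
    Matrix.neg_mul, Matrix.mul_neg, Matrix.sub_mul, mul_assoc, key, hcomm]
  abel
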